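/- Let p be a prime with p ∣ q−1 and p ∤ (q−1)/r, let b ≥ 2 be an integer, and set n = (q^{p^b}−1)/(q^{p^{b−1}}−1) (note n is coprime to q). Then {l_i : i ∈ Z_{n,r}} = {p, p^b}, N_1 = 0, N_p = 1, and N_{p^b} = (n−p)/p^b. In particular, n ≡ p (mod p²). -/

import Mathlib

open scoped Classical

/-- The `q`-cyclotomic coset of `i` modulo `N`, with representatives taken in `{1, …, N}`. -/
noncomputable def cosetOf (q N i : ℕ) : Finset ℕ :=
  (Finset.Icc 1 N).filter (fun x => ∃ j : ℕ, x ≡ i * q ^ j [MOD N])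

/-- `Z_{n,r} = {1 + i r : 0 ≤ i ≤ n-1}`. -/
def Zset (n r : ℕ) : Finset ℕ := (Finset.range n).image (fun i => 1 + i * r)

/-- The collection of `q`-cyclotomic cosets contained in `Z_{n,r}`. -/
noncomputable def cosetsIn (q n r : ℕ) : Finset (Finset ℕ) :=
  (Zset n r).image (fun i => cosetOf q (n * r) i)

/-- `N_l`: the number of `q`-cyclotomic cosets of size `l` contained in `Z_{n,r}`. -/
noncomputable def Ncount (q n r l : ℕ) : ℕ :=
  ((cosetsIn q n r).filter (fun C => C.card = l)).card

/-- Coset leader: the smallest element of a coset. -/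
noncomputable def leader (C : Finset ℕ) : ℕ := sInf (C : Set ℕ)

/-- The sorted (increasing) list of coset leaders of the cosets of size `l` in `Z_{n,r}`. -/
noncomputable def leaderList (q n r l : ℕ) : List ℕ :=
  Finset.sort (((cosetsIn q n r).filter (fun C => C.card = l)).image leader) (· ≤ ·)

/-- `δ_i^{(l)}`: the `i`-th smallest coset leader (1-indexed). -/
noncomputable def delta (q n r l i : ℕ) : ℕ := (leaderList q n r l).getD (i - 1) 0

/-! With `Q = q ^ p ^ (b - 1)` we have `n = 1 + Q + ⋯ + Q ^ (p - 1) ≡ p (mod Q - 1)`; since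
`p ^ 2 ∣ Q - 1` this gives `n ≡ p (mod p ^ 2)` and `gcd n (Q - 1) = p`.

For `i ∈ Z_{n,r}` (so `gcd i r = 1`) the coset of `i` modulo `n r` has the size of the order
of `q` modulo `e r`, where `e = n / gcd n i ≠ 1`. This order divides `p ^ b` because
`n r ∣ q ^ p ^ b - 1`, and it divides `p ^ (b - 1)` only if `e r ∣ Q - 1`, which forces
`e ∣ gcd n (Q - 1) = p`. So the coset of `i` has size `p` when `e = p`, i.e. when `n / p ∣ i`
(exactly `p` elements of `Z_{n,r}`, because `n / p` is prime to `r`), and size `p ^ b` otherwise.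
Finally, the cosets of size `l` cover `l * N_l` elements. -/

open Finset

theorem geom_sum_modEq {x m : ℕ} (h : x ≡ 1 [MOD m]) (k : ℕ) :
    ∑ j ∈ range k, x ^ j ≡ k [MOD m] := by
  rw [← ZMod.natCast_eq_natCast_iff] at h ⊢
  push_cast
  simp [h]

theorem lt_geom_sum {Q m : ℕ} (hm : 2 ≤ m) : Q < ∑ j ∈ range m, Q ^ j :=
  calc Q < ∑ j ∈ range 2, Q ^ j := by simp [sum_range_succ]
    _ ≤ _ := sum_le_sum_of_subset (range_subset_range.2 hm)

theorem geom_sum_mul_dvd_pow_sub_one {x r : ℕ} (hx : 1 ≤ x) (hr : r ∣ x - 1) (m : ℕ) :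
    (∑ j ∈ range m, x ^ j) * r ∣ x ^ m - 1 :=
  geom_sum_mul_of_one_le hx m ▸ mul_dvd_mul_left _ hr

theorem mul_dvd_pow_sub_one {x p r : ℕ} (hx : 1 ≤ x) (hp : p ∣ x - 1) (hr : r ∣ x - 1) :
    p * r ∣ x ^ p - 1 := by
  have hsum : p ∣ ∑ j ∈ range p, x ^ j := Nat.modEq_zero_iff_dvd.1 <|
    (geom_sum_modEq ((Nat.modEq_iff_dvd' hx).2 hp).symm p).trans (Nat.modEq_zero_iff_dvd.2 dvd_rfl)
  exact (mul_dvd_mul_right hsum r).trans (geom_sum_mul_dvd_pow_sub_one hx hr p)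

theorem gcd_geom_sum_sub_one {Q p : ℕ} (hQ : 1 ≤ Q) (hp : p ∣ Q - 1) :
    (∑ j ∈ range p, Q ^ j).gcd (Q - 1) = p := by
  rw [(geom_sum_modEq (Nat.modEq_sub hQ) p).gcd_eq, Nat.gcd_eq_left hp]

theorem coprime_div_of_gcd_eq {n m p r : ℕ} (h : n.gcd m = p) (hp : 0 < p) (hpr : p * r ∣ m) :
    (n / p).Coprime r := by
  have := Nat.coprime_div_gcd_div_gcd (m := n) (n := m) (h ▸ hp)
  rw [h] at this
  exact this.coprime_dvd_right (Nat.dvd_div_of_mul_dvd hpr)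

theorem Nat.Prime.dvd_of_not_dvd_div {p r m : ℕ} (hp : p.Prime) (hr : r ∣ m) (hpm : p ∣ m)
    (h : ¬ p ∣ m / r) : p ∣ r := by
  obtain ⟨s, rfl⟩ := hr
  rcases Nat.eq_zero_or_pos r with rfl | hr0
  · exact dvd_zero p
  rw [Nat.mul_div_cancel_left s hr0] at h
  exact (hp.dvd_mul.1 hpm).resolve_right h

theorem natCast_pow_eq_one_iff_dvd {q m k : ℕ} (hq : 1 ≤ q) :
    (q : ZMod m) ^ k = 1 ↔ m ∣ q ^ k - 1 := by
  rw [← Nat.cast_pow, ← Nat.cast_one, ZMod.natCast_eq_natCast_iff, Nat.ModEq.comm,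
    Nat.modEq_iff_dvd' (Nat.one_le_pow _ _ hq)]

theorem coprime_of_dvd_pow_sub_one {q m k : ℕ} (hq : 1 ≤ q) (hk : k ≠ 0)
    (h : m ∣ q ^ k - 1) : q.Coprime m :=
  (ZMod.isUnit_iff_coprime q m).1 (IsUnit.of_pow_eq_one ((natCast_pow_eq_one_iff_dvd hq).2 h) hk)

theorem div_gcd_dvd_iff {n d i : ℕ} (hn : 0 < n) (hd : d ∣ n) :
    n / n.gcd i ∣ d ↔ n / d ∣ i := by
  have hd0 : 0 < d := Nat.pos_of_dvd_of_pos hd hn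
  have hgcd : n / d ∣ i ↔ n / d ∣ n.gcd i := by
    rw [Nat.dvd_gcd_iff, and_iff_right (Nat.div_dvd_of_dvd hd)]
  rw [hgcd, Nat.div_dvd_iff_dvd_mul (Nat.gcd_dvd_left n i) (Nat.gcd_pos_of_pos_left i hn),
    Nat.div_dvd_iff_dvd_mul hd hd0, mul_comm]

theorem card_filter_Icc_natCast {N : ℕ} [NeZero N] (s : Finset (ZMod N)) :
    #((Icc 1 N).filter (fun x : ℕ => (x : ZMod N) ∈ s)) = #s := by
  refine card_nbij' (fun x => (x : ZMod N)) (fun y => (y - 1).val + 1) ?_ ?_ ?_ ?_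
  · intro x hx
    simp only [coe_filter] at hx
    exact hx.2
  · intro y hy
    simp only [coe_filter, mem_Icc, Set.mem_ofPred_eq]
    refine ⟨⟨by omega, ZMod.val_lt _⟩, by simpa using hy⟩
  · intro x hx
    simp only [coe_filter, mem_Icc, Set.mem_ofPred_eq] at hx
    have hx1 : ((x : ZMod N) - 1) = ((x - 1 : ℕ) : ZMod N) := by
      rw [Nat.cast_sub hx.1.1, Nat.cast_one]
    dsimp only
    rw [hx1, ZMod.val_natCast, Nat.mod_eq_of_lt (by omega)]
    omega
  · intro y hy
    simp

section Cosets

variable {q N : ℕ}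

theorem mem_cosetOf {i x : ℕ} :
    x ∈ cosetOf q N i ↔ x ∈ Icc 1 N ∧ ∃ j, (x : ZMod N) = i * q ^ j := by
  simp only [cosetOf, mem_filter, ← ZMod.natCast_eq_natCast_iff, Nat.cast_mul, Nat.cast_pow]

theorem self_mem_cosetOf {i : ℕ} (hi : i ∈ Icc 1 N) : i ∈ cosetOf q N i :=
  mem_cosetOf.2 ⟨hi, 0, by simp⟩

theorem natCast_mul_pow_eq_self_iff (hN : 0 < N) (i k : ℕ) :
    (i : ZMod N) * q ^ k = i ↔ orderOf (q : ZMod (N / N.gcd i)) ∣ k := by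
  rw [orderOf_dvd_iff_pow_eq_one, ← Nat.cast_pow, ← Nat.cast_pow, ← Nat.cast_mul,
    ← Nat.cast_one, ZMod.natCast_eq_natCast_iff, ZMod.natCast_eq_natCast_iff]
  refine ⟨fun h => Nat.ModEq.cancel_left_div_gcd hN (by rwa [mul_one]), fun h => ?_⟩
  have hlcm : N ∣ i * (N / N.gcd i) := by
    rw [← Nat.mul_div_assoc _ (Nat.gcd_dvd_left N i),
      ← Nat.div_mul_right_comm (Nat.gcd_dvd_right N i)]
    exact dvd_mul_left N _
  simpa using (h.mul_left' i).of_dvd hlcm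

theorem natCast_mul_pow_mod_orderOf (hN : 0 < N) (i j : ℕ) :
    (i : ZMod N) * q ^ (j % orderOf (q : ZMod (N / N.gcd i))) = i * q ^ j := by
  set l := orderOf (q : ZMod (N / N.gcd i))
  have hperiod := (natCast_mul_pow_eq_self_iff hN i (l * (j / l))).2 (dvd_mul_right _ _)
  calc (i : ZMod N) * q ^ (j % l) = i * q ^ (l * (j / l)) * q ^ (j % l) := by rw [hperiod]
    _ = i * q ^ (j % l + l * (j / l)) := by ring
    _ = i * q ^ j := by rw [Nat.mod_add_div]

theorem orderOf_natCast_pos (hN : 0 < N) (hq : q.Coprime N) (i : ℕ) :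
    0 < orderOf (q : ZMod (N / N.gcd i)) := by
  have hdvd : N / N.gcd i ∣ N := Nat.div_dvd_of_dvd (Nat.gcd_dvd_left N i)
  have : NeZero (N / N.gcd i) := ⟨fun h => by simp [h] at hdvd; omega⟩
  exact orderOf_pos_iff.2
    ((ZMod.isUnit_iff_coprime q _).2 (hq.coprime_dvd_right hdvd)).isOfFinOrder

theorem card_cosetOf (hN : 0 < N) (hq : q.Coprime N) (i : ℕ) :
    #(cosetOf q N i) = orderOf (q : ZMod (N / N.gcd i)) := by
  have : NeZero N := ⟨hN.ne'⟩
  set l := orderOf (q : ZMod (N / N.gcd i))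
  have hl : 0 < l := orderOf_natCast_pos hN hq i
  have hcoset : cosetOf q N i = (Icc 1 N).filter
      (fun x : ℕ => (x : ZMod N) ∈ (range l).image (fun j => (i : ZMod N) * q ^ j)) := by
    ext x
    simp only [mem_cosetOf, mem_filter, mem_image, mem_range]
    constructor
    · rintro ⟨hx, j, hj⟩
      exact ⟨hx, j % l, Nat.mod_lt j hl, by rw [hj, natCast_mul_pow_mod_orderOf hN]⟩
    · rintro ⟨hx, j, -, hj⟩
      exact ⟨hx, j, hj.symm⟩
  rw [hcoset, card_filter_Icc_natCast, card_image_of_injOn, card_range]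
  suffices h : ∀ a b, b ≤ a → a < l → (i : ZMod N) * q ^ a = i * q ^ b → a = b by
    intro a ha b hb hab
    simp only [coe_range, Set.mem_Iio] at ha hb
    rcases le_total b a with hba | hab'
    · exact h a b hba ha hab
    · exact (h b a hab' hb hab.symm).symm
  intro a b hba ha hab
  -- multiplying by `q ^ (l - b)` turns the collision into a period `a - b + l`
  have hdvd : l ∣ a - b + l := by
    rw [← natCast_mul_pow_eq_self_iff hN]
    calc (i : ZMod N) * q ^ (a - b + l) = i * q ^ a * q ^ (l - b) := by
          rw [mul_assoc, ← pow_add, show a + (l - b) = a - b + l by omega]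
      _ = i * q ^ b * q ^ (l - b) := by rw [hab]
      _ = i * q ^ l := by rw [mul_assoc, ← pow_add, Nat.add_sub_cancel' (by omega)]
      _ = i := (natCast_mul_pow_eq_self_iff hN i l).2 dvd_rfl
  have := Nat.eq_zero_of_dvd_of_lt (Nat.dvd_add_self_right.1 hdvd) (by omega)
  omega

theorem cosetOf_eq_of_mem (hN : 0 < N) (hq : q.Coprime N) {i x : ℕ} (hx : x ∈ cosetOf q N i) :
    cosetOf q N x = cosetOf q N i := by
  obtain ⟨-, j, hj⟩ := mem_cosetOf.1 hx
  ext z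
  simp only [mem_cosetOf, hj]
  refine and_congr_right fun _ =>
    ⟨fun ⟨k, hk⟩ => ⟨j + k, by rw [hk, mul_assoc, pow_add]⟩, fun ⟨k, hk⟩ => ?_⟩
  obtain ⟨l, hl⟩ : ∃ l, orderOf (q : ZMod (N / N.gcd i)) = l + 1 :=
    Nat.exists_eq_add_one.2 (orderOf_natCast_pos hN hq i)
  refine ⟨k + l * j, ?_⟩
  rw [hk, mul_assoc, ← pow_add, ← natCast_mul_pow_mod_orderOf hN i (j + _),
    ← natCast_mul_pow_mod_orderOf hN i k, hl, show j + (k + l * j) = k + (l + 1) * j by ring,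
    Nat.add_mul_mod_self_left]

end Cosets

theorem card_filter_card_eq_mul {α : Type*} [DecidableEq α] {Z : Finset α} {C : α → Finset α}
    (hself : ∀ i ∈ Z, i ∈ C i) (hsub : ∀ i ∈ Z, C i ⊆ Z)
    (hcls : ∀ i ∈ Z, ∀ x ∈ C i, C x = C i) (l : ℕ) :
    #{i ∈ Z | #(C i) = l} = l * #{s ∈ Z.image C | #s = l} := by
  rw [card_eq_sum_card_image C, filter_image, sum_const_nat, mul_comm]
  simp only [mem_image, mem_filter]
  rintro _ ⟨i, ⟨hi, hil⟩, rfl⟩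
  rw [← hil]
  congr 1
  ext x
  simp only [mem_filter]
  constructor
  · rintro ⟨⟨hx, -⟩, hxi⟩
    exact hxi ▸ hself x hx
  · intro hx
    exact ⟨⟨hsub i hi hx, by rw [hcls i hi x hx, hil]⟩, hcls i hi x hx⟩

section Zset

variable {n r : ℕ}

theorem mem_Zset (hr : 0 < r) {x : ℕ} :
    x ∈ Zset n r ↔ x ∈ Icc 1 (n * r) ∧ x ≡ 1 [MOD r] := by
  simp only [Zset, mem_image, mem_range, mem_Icc]
  constructor
  · rintro ⟨k, hk, rfl⟩
    exact ⟨⟨by omega, by nlinarith⟩, by simp [Nat.ModEq, Nat.add_mul_mod_self_right]⟩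
  · rintro ⟨⟨hx1, hxn⟩, hx⟩
    obtain ⟨k, hk⟩ := (Nat.modEq_iff_dvd' hx1).1 hx.symm
    refine ⟨k, ?_, by rw [mul_comm]; omega⟩
    by_contra h
    have := Nat.mul_le_mul_right r (not_lt.1 h)
    rw [mul_comm] at hk
    omega

theorem card_Zset (hr : 0 < r) : #(Zset n r) = n := by
  rw [Zset, card_image_of_injective _ fun a b h => by simpa [hr.ne'] using h, card_range]

theorem coprime_of_mem_Zset (hr : 0 < r) {i : ℕ} (hi : i ∈ Zset n r) : i.Coprime r := by
  rw [Nat.Coprime, ((mem_Zset hr).1 hi).2.gcd_eq, Nat.gcd_one_left]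

theorem cosetOf_subset_Zset {q : ℕ} (hr : 0 < r) (hq : q ≡ 1 [MOD r]) {i : ℕ}
    (hi : i ∈ Zset n r) : cosetOf q (n * r) i ⊆ Zset n r := by
  intro x hx
  simp only [cosetOf, mem_filter] at hx
  obtain ⟨hx, j, hj⟩ := hx
  rw [mem_Zset hr] at hi ⊢
  exact ⟨hx, (hj.of_dvd (dvd_mul_left r n)).trans (by simpa using hi.2.mul (hq.pow j))⟩

theorem card_cosetOf_of_mem_Zset {q : ℕ} (hn : 0 < n) (hr : 0 < r) (hq : q.Coprime (n * r))
    {i : ℕ} (hi : i ∈ Zset n r) :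
    #(cosetOf q (n * r) i) = orderOf (q : ZMod (n / n.gcd i * r)) := by
  rw [card_cosetOf (Nat.mul_pos hn hr) hq,
    Nat.Coprime.gcd_mul_right_cancel n (coprime_of_mem_Zset hr hi).symm,
    Nat.div_mul_right_comm (Nat.gcd_dvd_left n i)]

theorem card_filter_dvd_Zset (hr : 0 < r) {M : ℕ} (hM : 0 < M) (hMr : M.Coprime r)
    (hMn : M ∣ n) : #{i ∈ Zset n r | M ∣ i} = n / M := by
  have : NeZero M := ⟨hM.ne'⟩
  obtain ⟨u, hu⟩ : ∃ u : (ZMod M)ˣ, (u : ZMod M) = r :=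
    ⟨_, ZMod.coe_unitOfCoprime r hMr.symm⟩
  have hdvd_iff (k : ℕ) :
      M ∣ 1 + k * r ↔ k ≡ (-(u⁻¹ : (ZMod M)ˣ) : ZMod M).val [MOD M] := by
    rw [← ZMod.natCast_eq_zero_iff, ← ZMod.natCast_eq_natCast_iff, ZMod.natCast_zmod_val,
      eq_neg_iff_add_eq_zero, ← Units.mul_left_eq_zero u (a := (k : ZMod M) + _), add_mul,
      Units.inv_mul, hu]
    push_cast
    rw [add_comm]
  rw [Zset, filter_image, card_image_of_injective _ fun a b h => by simpa [hr.ne'] using h]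
  simp only [hdvd_iff]
  rw [← Nat.count_eq_card_filter_range, Nat.count_modEq_card _ hM, Nat.mod_eq_zero_of_dvd hMn]
  simp

end Zset

section OrderOf

variable {q p r : ℕ}

theorem orderOf_natCast_mul_eq_prime (hp : p.Prime) (hq : 1 ≤ q) (hpq : p ∣ q - 1)
    (hrq : r ∣ q - 1) (hpr : ¬ p ∣ (q - 1) / r) : orderOf (q : ZMod (p * r)) = p := by
  have := Fact.mk hp
  refine orderOf_eq_prime ((natCast_pow_eq_one_iff_dvd hq).2 (mul_dvd_pow_sub_one hq hpq hrq))
    fun h => hpr (Nat.dvd_div_of_mul_dvd ?_)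
  rw [mul_comm, ← pow_one q]
  exact (natCast_pow_eq_one_iff_dvd hq).1 (by rwa [pow_one])

theorem orderOf_natCast_mul_eq_prime_pow {n e k : ℕ} (hp : p.Prime) (hq : 1 ≤ q)
    (hnr : n * r ∣ q ^ p ^ (k + 1) - 1) (hgcd : n.gcd (q ^ p ^ k - 1) = p) (he : e ∣ n)
    (hep : ¬ e ∣ p) : orderOf (q : ZMod (e * r)) = p ^ (k + 1) := by
  have := Fact.mk hp
  refine orderOf_eq_prime_pow (fun h => hep ?_)
    ((natCast_pow_eq_one_iff_dvd hq).2 ((mul_dvd_mul_right he r).trans hnr))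
  rw [natCast_pow_eq_one_iff_dvd hq] at h
  exact hgcd ▸ Nat.dvd_gcd he ((dvd_mul_right e r).trans h)

end OrderOf

theorem card_cosetOf_eq_ite {q r p n k i : ℕ} (hr : 0 < r) (hp : p.Prime) (hq : 1 ≤ q)
    (hpq : p ∣ q - 1) (hrq : r ∣ q - 1) (hpr : ¬ p ∣ (q - 1) / r) (hn : 0 < n)
    (hnr : n * r ∣ q ^ p ^ (k + 1) - 1) (hgcd : n.gcd (q ^ p ^ k - 1) = p)
    (hi : i ∈ Zset n r) :
    #(cosetOf q (n * r) i) = if n / p ∣ i then p else p ^ (k + 1) := by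
  rw [card_cosetOf_of_mem_Zset hn hr
    (coprime_of_dvd_pow_sub_one hq (pow_pos hp.pos _).ne' hnr) hi]
  have hpn : p ∣ n := hgcd ▸ Nat.gcd_dvd_left _ _
  have he : n / n.gcd i ∣ n := Nat.div_dvd_of_dvd (Nat.gcd_dvd_left n i)
  by_cases hi' : n / p ∣ i
  · have hpi : ¬ p ∣ i := fun hpi => hp.one_lt.ne' <|
      ((coprime_of_mem_Zset hr hi).coprime_dvd_left hpi).eq_one_of_dvd
        (hp.dvd_of_not_dvd_div hrq hpq hpr)
    have he1 : n / n.gcd i ≠ 1 := fun h =>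
      hpi (hpn.trans (by simpa using (div_gcd_dvd_iff hn (one_dvd n)).1 (h ▸ dvd_rfl)))
    rw [if_pos hi', (hp.eq_one_or_self_of_dvd _ ((div_gcd_dvd_iff hn hpn).2 hi')).resolve_left he1,
      orderOf_natCast_mul_eq_prime hp hq hpq hrq hpr]
  · rw [if_neg hi', orderOf_natCast_mul_eq_prime_pow hp hq hnr hgcd he
      (mt (div_gcd_dvd_iff hn hpn).1 hi')]

theorem mul_Ncount_eq_card_filter {q n r : ℕ} (hr : 0 < r) (hn : 0 < n)
    (hq : q.Coprime (n * r)) (hqr : q ≡ 1 [MOD r]) (l : ℕ) :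
    l * Ncount q n r l = #{i ∈ Zset n r | #(cosetOf q (n * r) i) = l} :=
  (card_filter_card_eq_mul (fun _ hi => self_mem_cosetOf ((mem_Zset hr).1 hi).1)
    (fun _ hi => cosetOf_subset_Zset hr hqr hi)
    (fun _ _ _ hx => cosetOf_eq_of_mem (Nat.mul_pos hn hr) hq hx) l).symm

theorem image_card_cosetOf_and_Ncount_of_card_eq_ite {q n r p c : ℕ} (hr : 0 < r)
    (hq : q.Coprime (n * r)) (hqr : q ≡ 1 [MOD r]) (hp : 1 < p) (hpc : p < c) (hpn : p < n)
    (hpdvd : p ∣ n) (hM : (n / p).Coprime r)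
    (hcard : ∀ i ∈ Zset n r, #(cosetOf q (n * r) i) = if n / p ∣ i then p else c) :
    (Zset n r).image (fun i => #(cosetOf q (n * r) i)) = {p, c} ∧ Ncount q n r 1 = 0 ∧
      Ncount q n r p = 1 ∧ Ncount q n r c = (n - p) / c := by
  have hE : #{i ∈ Zset n r | n / p ∣ i} = p := by
    rw [card_filter_dvd_Zset hr (Nat.div_pos hpn.le (by omega)) hM (Nat.div_dvd_of_dvd hpdvd),
      Nat.div_div_self hpdvd (by omega)]
  have hEc : #{i ∈ Zset n r | ¬ n / p ∣ i} = n - p := by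
    have := card_filter_add_card_filter_not (s := Zset n r) (fun i => n / p ∣ i)
    rw [card_Zset hr, hE] at this
    omega
  have hF : ∀ l, l * Ncount q n r l = #{i ∈ Zset n r | (if n / p ∣ i then p else c) = l} :=
    fun l => by
      rw [mul_Ncount_eq_card_filter hr (by omega) hq hqr]
      exact congrArg card (filter_congr fun i hi => by rw [hcard i hi])
  refine ⟨?_, ?_, ?_, ?_⟩
  · ext l
    simp only [mem_image, mem_insert, mem_singleton]
    constructor
    · rintro ⟨i, hi, rfl⟩
      rw [hcard i hi]
      split_ifs <;> simp
    · rintro (hl | hl) <;> rw [hl]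
      · obtain ⟨i, hi⟩ := card_pos.1 (show 0 < #{i ∈ Zset n r | n / p ∣ i} by omega)
        rw [mem_filter] at hi
        exact ⟨i, hi.1, by rw [hcard i hi.1, if_pos hi.2]⟩
      · obtain ⟨i, hi⟩ := card_pos.1 (show 0 < #{i ∈ Zset n r | ¬ n / p ∣ i} by omega)
        rw [mem_filter] at hi
        exact ⟨i, hi.1, by rw [hcard i hi.1, if_neg hi.2]⟩
  · have := hF 1
    rwa [one_mul, filter_eq_empty_iff.2 (fun i _ => by split_ifs <;> omega), card_empty] at this
  · have := hF p
    simp only [ite_eq_left_iff, hpc.ne', imp_false, not_not, hE] at this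
    exact Nat.eq_of_mul_eq_mul_left (by omega) (this.trans (mul_one p).symm)
  · have := hF c
    simp only [ite_eq_right_iff, hpc.ne, imp_false, hEc] at this
    exact (Nat.div_eq_of_eq_mul_right (by omega) this.symm).symm

theorem stmt18_general (q r p b n : ℕ) (hrdvd : r ∣ q - 1)
    (hp : p.Prime) (hp1 : p ∣ q - 1) (hp2 : ¬ p ∣ (q - 1) / r) (hb : 2 ≤ b)
    (hn : n = (q ^ p ^ b - 1) / (q ^ p ^ (b - 1) - 1)) :
    (Zset n r).image (fun i => (cosetOf q (n * r) i).card) = {p, p ^ b} ∧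
    Ncount q n r 1 = 0 ∧
    Ncount q n r p = 1 ∧
    Ncount q n r (p ^ b) = (n - p) / p ^ b ∧
    n ≡ p [MOD p ^ 2] := by
  have hp2le := hp.two_le
  have hr : 0 < r := Nat.pos_of_ne_zero fun h => hp2 (by simp [h])
  have hpq : p ≤ q - 1 := Nat.le_of_dvd (Nat.pos_of_ne_zero fun h => hp2 (by simp [h])) hp1
  obtain ⟨k, rfl⟩ : ∃ k, b = k + 1 := ⟨b - 1, by omega⟩
  set Q := q ^ p ^ k
  have hQ : q ≤ Q := Nat.le_self_pow (pow_ne_zero k hp.ne_zero) q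
  have hqQ : q ^ p - 1 ∣ Q - 1 := Nat.pow_sub_one_dvd_pow_sub_one q (dvd_pow_self p (by omega))
  have hnQ : n = ∑ j ∈ range p, Q ^ j := by
    rw [hn, Nat.geomSum_eq (by omega), ← pow_mul, ← pow_succ, Nat.add_sub_cancel]
  have hgcd : n.gcd (Q - 1) = p :=
    hnQ ▸ gcd_geom_sum_sub_one (by omega) (hp1.trans (Nat.sub_one_dvd_pow_sub_one q _))
  have hnr : n * r ∣ q ^ p ^ (k + 1) - 1 := by
    rw [pow_succ, pow_mul, hnQ]
    exact geom_sum_mul_dvd_pow_sub_one (by omega)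
      (hrdvd.trans (Nat.sub_one_dvd_pow_sub_one q _)) p
  have hpn : p < n := hnQ ▸ (show p < Q by omega).trans (lt_geom_sum hp2le)
  obtain ⟨himage, hN1, hNp, hNpb⟩ := image_card_cosetOf_and_Ncount_of_card_eq_ite hr
    (coprime_of_dvd_pow_sub_one (by omega) (pow_pos hp.pos _).ne' hnr)
    ((Nat.modEq_iff_dvd' (by omega)).2 hrdvd).symm hp.one_lt
    (by simpa using Nat.pow_lt_pow_right hp.one_lt (show 1 < k + 1 by omega)) hpn
    (hgcd ▸ Nat.gcd_dvd_left _ _)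
    (coprime_div_of_gcd_eq hgcd hp.pos ((mul_dvd_pow_sub_one (by omega) hp1 hrdvd).trans hqQ))
    (fun i hi => card_cosetOf_eq_ite hr hp (by omega) hp1 hrdvd hp2 (by omega) hnr hgcd hi)
  exact ⟨himage, hN1, hNp, hNpb, hnQ ▸ (geom_sum_modEq (Nat.modEq_sub (by omega)) p).of_dvd
    (pow_two p ▸ (mul_dvd_pow_sub_one (by omega) hp1 hp1).trans hqQ)⟩

theorem stmt18 (q r p b n : ℕ) (hq : IsPrimePow q) (hr : 0 < r) (hrdvd : r ∣ q - 1)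
    (hp : p.Prime) (hp1 : p ∣ q - 1) (hp2 : ¬ p ∣ (q - 1) / r) (hb : 2 ≤ b)
    (hn : n = (q ^ p ^ b - 1) / (q ^ p ^ (b - 1) - 1)) :
    (Zset n r).image (fun i => (cosetOf q (n * r) i).card) = {p, p ^ b} ∧
    Ncount q n r 1 = 0 ∧
    Ncount q n r p = 1 ∧
    Ncount q n r (p ^ b) = (n - p) / p ^ b ∧
    n ≡ p [MOD p ^ 2] :=
  stmt18_general q r p b n hrdvd hp hp1 hp2 hb hn
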